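/- Let d, w, U ≥ 1, γ ∈ (0,1) and β ∈ (0,1) satisfy γ·w ≥ 2 and 2^d ≥ 2/β, let σ > 0 and set E = √2·σ·√(log(4·d·w/β)). Let f : Fin U → ℕ be a frequency function with total count N = Σ_y f(y) ≥ 1 and fix x ∈ Fin U. Let (H_r(y))_{r ∈ Fin d, y ∈ Fin U} be i.i.d. uniform on Fin w and (η[r,c])_{r ∈ Fin d, c ∈ Fin w} be i.i.d. N(0, σ²), mutually independent, and define the private Count-Min estimate f̂(x) = min_{r ∈ Fin d} ( Σ_{y : H_r(y) = H_r(x)} f(y) + E + η[r, H_r(x)] ). Then with probability at least 1 − β, we have f(x) ≤ f̂(x) ≤ f(x) + γ·N + 2E. -/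

import Mathlib

/-!
Two things can spoil the estimate. Either some counter's noise exceeds `E` in absolute value:
by the Gaussian tail bound `2 exp (-E² / 2σ²) = β / (2dw)` and a union bound over the `d·w`
counters this has probability at most `β / 2`. Or in every row the mass of the other keys
sharing `x`'s bucket is at least `γN`: that mass has expectation at most `N / w`, so by Markov
each row is heavy with probability at most `1 / 2`, and the rows use independent hashes, so all
of them are heavy with probability at most `2⁻ᵈ ≤ β / 2`. Outside both events every row
overestimates `f x`, and a light row is within `γN + 2E` of it.
-/

open MeasureTheory ProbabilityTheory Real
open scoped ENNReal NNReal

/-- Codomain of the combined family: hash values live in `Fin w`, noise values in `ℝ`. -/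
def Codom (ι κ : Type) (w : ℕ) : ι ⊕ κ → Type
  | .inl _ => Fin w
  | .inr _ => ℝ

instance {ι κ : Type} {w : ℕ} (i : ι ⊕ κ) : MeasurableSpace (Codom ι κ w i) :=
  match i with
  | .inl _ => inferInstanceAs (MeasurableSpace (Fin w))
  | .inr _ => inferInstanceAs (MeasurableSpace ℝ)

/-- The combined family of the hash variables and the Gaussian noise variables. -/
def Vars {Ω : Type*} {ι κ : Type} {w : ℕ} (H : ι → Ω → Fin w) (η : κ → Ω → ℝ) :
    ∀ i : ι ⊕ κ, Ω → Codom ι κ w i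
  | .inl p => H p
  | .inr q => η q

open Finset

namespace ProbabilityTheory

variable {Ω : Type*} {mΩ : MeasurableSpace Ω} {P : Measure Ω}

lemma iIndepFun.curry {ι κ 𝓧 : Type*} [MeasurableSpace 𝓧] {X : ι × κ → Ω → 𝓧}
    (mX : ∀ p, Measurable (X p)) (h : iIndepFun X P) :
    iIndepFun (fun i ω j ↦ X (i, j) ω) P := by
  have := h.isProbabilityMeasure
  have (p : ι × κ) := Measure.isProbabilityMeasure_map (μ := P) (mX p).aemeasurable
  have hrow (i : ι) :
      P.map (fun ω j ↦ X (i, j) ω) = Measure.infinitePi fun j ↦ P.map (X (i, j)) :=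
    (h.precomp (Prod.mk_right_injective i)).map_fun_eq_infinitePi_map fun j ↦ mX (i, j)
  rw [iIndepFun_iff_map_fun_eq_infinitePi_map fun i ↦ measurable_pi_lambda _ fun j ↦ mX (i, j)]
  simp_rw [hrow]
  have hall : _ = Measure.infinitePi fun p : ι × κ ↦ P.map (X p) :=
    h.map_fun_eq_infinitePi_map mX
  rw [← Measure.infinitePi_map_curry (fun i j ↦ P.map (X (i, j))), ← hall,
    Measure.map_map (MeasurableEquiv.measurable _) (measurable_pi_lambda _ mX)]
  rfl

lemma iIndepFun.measureReal_iInter_preimage_le_pow {ι β : Type*} [Fintype ι] [MeasurableSpace β]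
    {Y : ι → Ω → β} (hY : iIndepFun Y P) {s : Set β} (hs : MeasurableSet s) {p : ℝ}
    (hp : ∀ i, P.real (Y i ⁻¹' s) ≤ p) :
    P.real (⋂ i, Y i ⁻¹' s) ≤ p ^ Fintype.card ι :=
  calc P.real (⋂ i, Y i ⁻¹' s) = ∏ i, P.real (Y i ⁻¹' s) := by
        simp_rw [measureReal_def, hY.meas_iInter fun i ↦ ⟨s, hs, rfl⟩, ENNReal.toReal_prod]
    _ ≤ ∏ _i : ι, p := prod_le_prod (fun i _ ↦ measureReal_nonneg) fun i _ ↦ hp i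
    _ = p ^ Fintype.card ι := by rw [prod_const, card_univ]

lemma IndepFun.measureReal_setOf_eq_of_map_eq_uniform [IsProbabilityMeasure P] {w : ℕ}
    {X Y : Ω → Fin w} (hXY : IndepFun X Y P) (hX : Measurable X) (hY : Measurable Y)
    (hunif : P.map X = (w : ℝ≥0∞)⁻¹ • Measure.count) :
    P.real {ω | X ω = Y ω} = (w : ℝ)⁻¹ := by
  have hfiber (c : Fin w) : P (X ⁻¹' {c}) = (w : ℝ≥0∞)⁻¹ := by
    rw [← Measure.map_apply hX (measurableSet_singleton c), hunif]
    simp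
  have hdiag : {ω | X ω = Y ω} = ⋃ c, X ⁻¹' {c} ∩ Y ⁻¹' {c} := by
    ext ω
    simp [eq_comm]
  have hdisj : Pairwise (Function.onFun Disjoint fun c ↦ X ⁻¹' {c} ∩ Y ⁻¹' {c}) :=
    fun c c' hcc' ↦ ((Set.disjoint_singleton.mpr hcc').preimage X).mono
      Set.inter_subset_left Set.inter_subset_left
  have : P {ω | X ω = Y ω} = (w : ℝ≥0∞)⁻¹ := calc
    P {ω | X ω = Y ω} = ∑ c, P (X ⁻¹' {c} ∩ Y ⁻¹' {c}) := by
      rw [hdiag, measure_iUnion hdisj fun c ↦ (hX (measurableSet_singleton c)).inter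
        (hY (measurableSet_singleton c)), tsum_fintype]
    _ = ∑ c, (w : ℝ≥0∞)⁻¹ * P (Y ⁻¹' {c}) := by
      simp_rw [hXY.measure_inter_preimage_eq_mul _ _ (measurableSet_singleton _)
        (measurableSet_singleton _), hfiber]
    _ = (w : ℝ≥0∞)⁻¹ := by
      rw [← mul_sum, sum_measure_preimage_singleton _ fun c _ ↦ hY (measurableSet_singleton c)]
      simp
  simp [measureReal_def, this]

lemma HasSubgaussianMGF.of_map_eq_gaussianReal {X : Ω → ℝ} (hX : AEMeasurable X P) {v : ℝ≥0}
    (h : P.map X = gaussianReal 0 v) : HasSubgaussianMGF X v P := by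
  rw [← HasSubgaussianMGF.id_map_iff hX, h]
  exact ⟨integrable_exp_mul_gaussianReal, fun t ↦ by simp [mgf_id_gaussianReal]⟩

lemma HasSubgaussianMGF.measureReal_abs_gt_le [IsFiniteMeasure P] {X : Ω → ℝ} {c : ℝ≥0}
    (h : HasSubgaussianMGF X c P) {ε : ℝ} (hε : 0 ≤ ε) :
    P.real {ω | ε < |X ω|} ≤ 2 * exp (-ε ^ 2 / (2 * c)) := by
  have hsub : {ω | ε < |X ω|} ⊆ {ω | ε ≤ X ω} ∪ {ω | ε ≤ (-X) ω} := fun ω hω ↦ by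
    rcases lt_abs.mp (show ε < |X ω| from hω) with hω | hω
    exacts [Or.inl hω.le, Or.inr hω.le]
  calc P.real {ω | ε < |X ω|} ≤ P.real ({ω | ε ≤ X ω} ∪ {ω | ε ≤ (-X) ω}) := measureReal_mono hsub
    _ ≤ P.real {ω | ε ≤ X ω} + P.real {ω | ε ≤ (-X) ω} := measureReal_union_le _ _
    _ ≤ 2 * exp (-ε ^ 2 / (2 * c)) := by
      linarith [h.measure_ge_le hε, h.neg.measure_ge_le hε]

lemma measureReal_iUnion_abs_gt_le_of_map_eq_gaussianReal [IsFiniteMeasure P] {κ : Type*}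
    [Fintype κ] {η : κ → Ω → ℝ} (hη : ∀ q, Measurable (η q)) {σ : ℝ} (hσ : 0 < σ)
    (hdist : ∀ q, P.map (η q) = gaussianReal 0 ⟨σ ^ 2, sq_nonneg σ⟩) {a : ℝ} (ha : 1 ≤ a) :
    P.real (⋃ q, {ω | √2 * σ * √(log a) < |η q ω|}) ≤ 2 * Fintype.card κ / a := by
  have hexp : exp (-(√2 * σ * √(log a)) ^ 2 / (2 * σ ^ 2)) = a⁻¹ := by
    rw [mul_pow, mul_pow, sq_sqrt zero_le_two, sq_sqrt (log_nonneg ha),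
      show -(2 * σ ^ 2 * log a) / (2 * σ ^ 2) = -log a by field_simp, exp_neg,
      exp_log (by linarith)]
  have htail (q : κ) : P.real {ω | √2 * σ * √(log a) < |η q ω|} ≤ 2 / a := by
    have := (HasSubgaussianMGF.of_map_eq_gaussianReal (hη q).aemeasurable (hdist q))
      |>.measureReal_abs_gt_le (ε := √2 * σ * √(log a)) (by positivity)
    change _ ≤ 2 * exp (-(√2 * σ * √(log a)) ^ 2 / (2 * σ ^ 2)) at this
    rwa [hexp, ← div_eq_mul_inv] at this
  calc P.real (⋃ q, {ω | √2 * σ * √(log a) < |η q ω|})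
      ≤ ∑ q, P.real {ω | √2 * σ * √(log a) < |η q ω|} := measureReal_iUnion_fintype_le _
    _ ≤ ∑ _q : κ, 2 / a := sum_le_sum fun q _ ↦ htail q
    _ = 2 * Fintype.card κ / a := by rw [sum_const, card_univ, nsmul_eq_mul]; ring

lemma ofReal_one_sub_le_measure_of_compl_subset [IsProbabilityMeasure P] {s t : Set Ω} {β : ℝ}
    (hst : sᶜ ⊆ t) (hs : P.real s ≤ β) : ENNReal.ofReal (1 - β) ≤ P t := by
  have : 1 ≤ P.real s + P.real t := calc
    1 = P.real (s ∪ t) := by rw [Set.compl_subset_iff_union.mp hst, probReal_univ]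
    _ ≤ P.real s + P.real t := measureReal_union_le _ _
  rw [← ofReal_measureReal]
  exact ENNReal.ofReal_le_ofReal (by linarith)

end ProbabilityTheory

section CollisionMass

variable {U B : Type*} [Fintype U] [DecidableEq U] [DecidableEq B]

def collisionMass (f : U → ℕ) (x : U) (h : U → B) : ℕ :=
  ∑ y ∈ univ.erase x, if h y = h x then f y else 0

lemma sum_filter_apply_eq_eq_add_collisionMass (f : U → ℕ) (x : U) (h : U → B) :
    ∑ y ∈ univ.filter (fun y ↦ h y = h x), (f y : ℝ) = f x + collisionMass f x h := by
  rw [sum_filter, ← add_sum_erase _ _ (mem_univ x), if_pos rfl, collisionMass]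
  push_cast
  rfl

variable {Ω : Type*} {mΩ : MeasurableSpace Ω} {P : Measure Ω}

lemma collisionMass_eq_sum_indicator (f : U → ℕ) (x : U) (h : U → Ω → B) :
    (fun ω ↦ (collisionMass f x (h · ω) : ℝ)) =
      fun ω ↦ ∑ y ∈ univ.erase x, {ω | h y ω = h x ω}.indicator (fun _ ↦ (f y : ℝ)) ω := by
  ext ω
  simp [collisionMass, Set.indicator_apply]

variable [IsProbabilityMeasure P] {w : ℕ} {h : U → Ω → Fin w}

lemma integrable_collisionMass (f : U → ℕ) (x : U) (hm : ∀ y, Measurable (h y)) :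
    Integrable (fun ω ↦ (collisionMass f x (h · ω) : ℝ)) P := by
  rw [collisionMass_eq_sum_indicator]
  exact integrable_finsetSum _ fun y _ ↦
    (integrable_const _).indicator (measurableSet_eq_fun (hm y) (hm x))

lemma integral_collisionMass (f : U → ℕ) (x : U) (hm : ∀ y, Measurable (h y))
    (hunif : ∀ y, P.map (h y) = (w : ℝ≥0∞)⁻¹ • Measure.count)
    (hindep : ∀ y ≠ x, IndepFun (h y) (h x) P) :
    ∫ ω, (collisionMass f x (h · ω) : ℝ) ∂P = (∑ y ∈ univ.erase x, f y : ℕ) / w := by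
  have hmeas (y : U) : MeasurableSet {ω | h y ω = h x ω} := measurableSet_eq_fun (hm y) (hm x)
  rw [collisionMass_eq_sum_indicator, integral_finsetSum _ fun y _ ↦
    (integrable_const _).indicator (hmeas y), Nat.cast_sum, sum_div]
  refine sum_congr rfl fun y hy ↦ ?_
  rw [integral_indicator_const _ (hmeas y),
    (hindep y (ne_of_mem_erase hy)).measureReal_setOf_eq_of_map_eq_uniform (hm y) (hm x)
      (hunif y), smul_eq_mul, inv_mul_eq_div]

lemma measureReal_collisionMass_ge_le_half (f : U → ℕ) (x : U) (hm : ∀ y, Measurable (h y))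
    (hunif : ∀ y, P.map (h y) = (w : ℝ≥0∞)⁻¹ • Measure.count)
    (hindep : ∀ y ≠ x, IndepFun (h y) (h x) P) {N : ℕ} (hfN : ∑ y, f y ≤ N) (hN : 0 < N)
    {γ : ℝ} (hγ : 0 < γ) (hγw : 2 ≤ γ * w) :
    P.real {ω | γ * N ≤ (collisionMass f x (h · ω) : ℝ)} ≤ 1 / 2 := by
  have hw : (0 : ℝ) < w := by
    by_contra! hw
    nlinarith [(Nat.cast_nonneg w : (0 : ℝ) ≤ w)]
  have hN' : (0 : ℝ) < N := by exact_mod_cast hN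
  have hmass : (∑ y ∈ univ.erase x, f y : ℕ) ≤ (N : ℝ) := by
    exact_mod_cast (sum_le_sum_of_subset (erase_subset x univ)).trans hfN
  have hmarkov := mul_meas_ge_le_integral_of_nonneg (ae_of_all _ fun ω ↦ Nat.cast_nonneg _)
    (integrable_collisionMass (P := P) f x hm) (γ * N)
  rw [integral_collisionMass f x hm hunif hindep, le_div_iff₀ hw] at hmarkov
  set p := P.real {ω | γ * N ≤ (collisionMass f x (h · ω) : ℝ)}
  have hp : 0 ≤ p := measureReal_nonneg
  have : 2 * N * p ≤ 2 * N * (1 / 2) := by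
    nlinarith [mul_le_mul_of_nonneg_right hγw (mul_nonneg hN'.le hp)]
  exact le_of_mul_le_mul_left this (by positivity)

lemma measureReal_iInter_collisionMass_ge_le {R : Type*} [Fintype R] {H : R × U → Ω → Fin w}
    (f : U → ℕ) (x : U) (hm : ∀ p, Measurable (H p))
    (hunif : ∀ p, P.map (H p) = (w : ℝ≥0∞)⁻¹ • Measure.count) (hindep : iIndepFun H P)
    {N : ℕ} (hfN : ∑ y, f y ≤ N) (hN : 0 < N) {γ : ℝ} (hγ : 0 < γ) (hγw : 2 ≤ γ * w) :
    P.real (⋂ r, {ω | γ * N ≤ (collisionMass f x (fun y ↦ H (r, y) ω) : ℝ)}) ≤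
      (1 / 2) ^ Fintype.card R :=
  (hindep.curry hm).measureReal_iInter_preimage_le_pow
    (s := {h | γ * N ≤ (collisionMass f x h : ℝ)}) .of_discrete fun r ↦
      measureReal_collisionMass_ge_le_half f x (fun y ↦ hm (r, y)) (fun y ↦ hunif (r, y))
        (fun y hy ↦ hindep.indepFun (by simpa using hy)) hfN hN hγ hγw

end CollisionMass

lemma le_iInf_add_and_iInf_add_le {ι : Type*} [Finite ι] [Nonempty ι] {a b E : ℝ}
    {m n : ι → ℝ} (hm : ∀ i, 0 ≤ m i) (hn : ∀ i, |n i| ≤ E) {i₀ : ι} (hi₀ : m i₀ < b) :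
    a ≤ ⨅ i, (a + m i + E + n i) ∧ ⨅ i, (a + m i + E + n i) ≤ a + b + 2 * E := by
  refine ⟨le_ciInf fun i ↦ ?_, (ciInf_le (Set.finite_range _).bddBelow i₀).trans ?_⟩
  · linarith [hm i, (abs_le.mp (hn i)).1]
  · linarith [(abs_le.mp (hn i₀)).2]

theorem stmt16_general {Ω : Type*} [MeasurableSpace Ω] (P : Measure Ω) [IsProbabilityMeasure P]
    (d w U : ℕ) (hd : 1 ≤ d) (hw : 1 ≤ w)
    (γ β : ℝ) (hγ : γ ∈ Set.Ioo (0 : ℝ) 1) (hβ : β ∈ Set.Ioo (0 : ℝ) 1)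
    (hγw : 2 ≤ γ * w) (hdβ : 2 / β ≤ 2 ^ d)
    (σ : ℝ) (hσ : 0 < σ)
    (E : ℝ) (hE : E = Real.sqrt 2 * σ * Real.sqrt (Real.log (4 * d * w / β)))
    (f : Fin U → ℕ) (N : ℕ) (hN : N = ∑ y : Fin U, f y) (hN1 : 1 ≤ N)
    (x : Fin U)
    (H : Fin d × Fin U → Ω → Fin w)
    (η : Fin d × Fin w → Ω → ℝ)
    (hmeas : ∀ i, Measurable (Vars H η i))
    (hindep : iIndepFun (Vars H η) P)
    (hdistH : ∀ p, Measure.map (H p) P = (w : ℝ≥0∞)⁻¹ • Measure.count)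
    (hdistη : ∀ q, Measure.map (η q) P = gaussianReal 0 ⟨σ ^ 2, sq_nonneg σ⟩)
    (fhat : Ω → ℝ)
    (hfh : ∀ ω, fhat ω = ⨅ r : Fin d,
      ((∑ y ∈ Finset.univ.filter (fun y => H (r, y) ω = H (r, x) ω), (f y : ℝ))
        + E + η (r, H (r, x) ω) ω)) :
    ENNReal.ofReal (1 - β) ≤
      P {ω | (f x : ℝ) ≤ fhat ω ∧ fhat ω ≤ (f x : ℝ) + γ * N + 2 * E} := by
  obtain ⟨hγ0, -⟩ := hγ
  obtain ⟨hβ0, hβ1⟩ := hβ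
  have : Nonempty (Fin d) := ⟨⟨0, hd⟩⟩
  have hHm (p : Fin d × Fin U) : Measurable (H p) := hmeas (.inl p)
  have hH : iIndepFun H P :=
    (hindep.precomp Sum.inl_injective : iIndepFun (fun p ↦ Vars H η (.inl p)) P)
  set largeNoise := ⋃ q, {ω | E < |η q ω|}
  set heavyRows := ⋂ r, {ω | γ * N ≤ (collisionMass f x (fun y ↦ H (r, y) ω) : ℝ)}
  have hnoise : P.real largeNoise ≤ β / 2 := by
    have ha : 1 ≤ 4 * d * w / β := by
      rw [le_div_iff₀ hβ0]
      nlinarith [(by exact_mod_cast hd : (1 : ℝ) ≤ d), (by exact_mod_cast hw : (1 : ℝ) ≤ w)]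
    have := measureReal_iUnion_abs_gt_le_of_map_eq_gaussianReal (fun q ↦ hmeas (.inr q)) hσ
      hdistη ha
    rw [← hE, Fintype.card_prod, Fintype.card_fin, Fintype.card_fin, Nat.cast_mul] at this
    exact this.trans_eq (by field_simp; ring)
  have hheavy : P.real heavyRows ≤ β / 2 := by
    refine (measureReal_iInter_collisionMass_ge_le f x hHm hdistH hH hN.ge (by omega) hγ0
      hγw).trans ?_
    rw [Fintype.card_fin, div_pow, one_pow, div_le_div_iff₀ (by positivity) two_pos]
    nlinarith [(div_le_iff₀ hβ0).mp hdβ]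
  refine ofReal_one_sub_le_measure_of_compl_subset (s := largeNoise ∪ heavyRows)
    (fun ω hω ↦ ?_) ((measureReal_union_le _ _).trans (by linarith))
  simp only [Set.compl_union, Set.mem_inter_iff, Set.mem_compl_iff, largeNoise, heavyRows,
    Set.mem_iUnion, Set.mem_iInter, Set.mem_ofPred_eq, not_exists, not_lt, not_forall,
    not_le] at hω
  obtain ⟨hsmall, r₀, hr₀⟩ := hω
  simp_rw [Set.mem_ofPred_eq, hfh ω, sum_filter_apply_eq_eq_add_collisionMass]
  exact le_iInf_add_and_iInf_add_le (fun r ↦ Nat.cast_nonneg _) (fun r ↦ hsmall _) hr₀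

/-- Point-wise utility of the private Count-Min sketch: with `d` rows,
`w` columns, `γ·w ≥ 2`, `2^d ≥ 2/β`, fully random i.i.d. hashes, and i.i.d. `N(0,σ²)` noises
independent of the hashes, the private estimate
`f̂(x) = min_r (counter + E + noise)` with `E = √2·σ·√(log(4dw/β))` satisfies, with
probability at least `1 - β`, `f(x) ≤ f̂(x) ≤ f(x) + γ·N + 2E`. -/
theorem stmt16 {Ω : Type*} [MeasurableSpace Ω] (P : Measure Ω) [IsProbabilityMeasure P]
    (d w U : ℕ) (hd : 1 ≤ d) (hw : 1 ≤ w) (hU : 1 ≤ U)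
    (γ β : ℝ) (hγ : γ ∈ Set.Ioo (0 : ℝ) 1) (hβ : β ∈ Set.Ioo (0 : ℝ) 1)
    (hγw : 2 ≤ γ * w) (hdβ : 2 / β ≤ 2 ^ d)
    (σ : ℝ) (hσ : 0 < σ)
    (E : ℝ) (hE : E = Real.sqrt 2 * σ * Real.sqrt (Real.log (4 * d * w / β)))
    (f : Fin U → ℕ) (N : ℕ) (hN : N = ∑ y : Fin U, f y) (hN1 : 1 ≤ N)
    (x : Fin U)
    (H : Fin d × Fin U → Ω → Fin w)
    (η : Fin d × Fin w → Ω → ℝ)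
    (hmeas : ∀ i, Measurable (Vars H η i))
    (hindep : iIndepFun (Vars H η) P)
    (hdistH : ∀ p, Measure.map (H p) P = (w : ℝ≥0∞)⁻¹ • Measure.count)
    (hdistη : ∀ q, Measure.map (η q) P = gaussianReal 0 ⟨σ ^ 2, sq_nonneg σ⟩)
    (fhat : Ω → ℝ)
    (hfh : ∀ ω, fhat ω = ⨅ r : Fin d,
      ((∑ y ∈ Finset.univ.filter (fun y => H (r, y) ω = H (r, x) ω), (f y : ℝ))
        + E + η (r, H (r, x) ω) ω)) :
    ENNReal.ofReal (1 - β) ≤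
      P {ω | (f x : ℝ) ≤ fhat ω ∧ fhat ω ≤ (f x : ℝ) + γ * N + 2 * E} :=
  stmt16_general P d w U hd hw γ β hγ hβ hγw hdβ σ hσ E hE f N hN hN1 x H η hmeas hindep hdistH
    hdistη fhat hfh
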